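/- Let λ ∈ ℝ, z ∈ ℂ with z ≠ λ, d ∈ ℝ, ω ∈ ℂ, and let (a,b) ⊆ ℝ be an interval. Let Θλ : (a,b) → ℝ², let c : (a,b) → ℝ with c(x) ≠ 0 for all x, and set Θ̃(x) = Θλ(x)/c(x). Let Θz, Φz : (a,b) → ℂ², let M ∈ ℂ, and set Ψz = Θz + M·Φz. Define Φ_γ(x) = (z-λ)·Φz(x) + Θ̃(x)·W_x(Θλ,Φz), Θ_γ(x) = (1/(z-λ))·(Θz(x) + (1/(z-λ))·Θ̃(x)·W_x(Θλ,Θz) + (d − ω)·Φ_γ(x)), and Ψ_γ(x) = (1/(z-λ))·(Ψz(x) + (1/(z-λ))·Θ̃(x)·W_x(Θλ,Ψz)). Then for all x ∈ (a,b), Ψ_γ(x) = Θ_γ(x) + M_γ·Φ_γ(x), where M_γ = (M + ω·(z-λ))/(z-λ)² − d/(z-λ). -/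

import Mathlib

open Set

noncomputable section

/-- The Wronskian `W(f,g) = f₁g₂ - f₂g₁` of two vectors in `ℂ²`. -/
def Wr (f g : ℂ × ℂ) : ℂ := f.1 * g.2 - f.2 * g.1

/-- Embedding of `ℝ²` into `ℂ²`. -/
def toC (v : ℝ × ℝ) : ℂ × ℂ := ((v.1 : ℂ), (v.2 : ℂ))

theorem Wr_add (f g h : ℂ × ℂ) : Wr f (g + h) = Wr f g + Wr f h := by
  simp only [Wr, Prod.fst_add, Prod.snd_add]
  ring

theorem Wr_smul (f g : ℂ × ℂ) (m : ℂ) : Wr f (m • g) = m * Wr f g := by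
  simp only [Wr, Prod.smul_fst, Prod.smul_snd, smul_eq_mul]
  ring

/-- The left side is the image of `θ + M • φ` under the map
`u ↦ w⁻¹ • (u + (w⁻¹ * W(Θλ, u)) • k)`, which is linear in `u`; the identity holds because
`w⁻¹ * (d - ω) + M_γ = M / w²` turns `Φ_γ = w • φ + Wφ • k` into the image of `M • φ`. -/
theorem inv_smul_add_eq_add_smul_commuted {K V : Type*} [Field K] [AddCommGroup V]
    [Module K V] {w : K} (hw : w ≠ 0) (d ω M Wθ Wφ : K) (θ φ k : V) :
    w⁻¹ • (θ + M • φ + (w⁻¹ * (Wθ + M * Wφ)) • k)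
      = w⁻¹ • (θ + (w⁻¹ * Wθ) • k + (d - ω) • (w • φ + Wφ • k))
        + ((M + ω * w) / w ^ 2 - d / w) • (w • φ + Wφ • k) := by
  match_scalars <;> field_simp <;> ring

theorem double_commutation_right_weyl_function_general
    (a b lam : ℝ) (z : ℂ) (hz : z ≠ (lam : ℂ)) (d : ℝ) (ω : ℂ)
    (Θlam : ℝ → ℝ × ℝ)
    (Θt : ℝ → ℂ × ℂ)
    (Θz Φz Ψz : ℝ → ℂ × ℂ) (M : ℂ)
    (hΨ : ∀ x ∈ Ioo a b, Ψz x = Θz x + M • Φz x)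
    (Φγ Θγ Ψγ : ℝ → ℂ × ℂ)
    (hΦγ : ∀ x ∈ Ioo a b,
      Φγ x = (z - (lam : ℂ)) • Φz x + (Wr (toC (Θlam x)) (Φz x)) • Θt x)
    (hΘγ : ∀ x ∈ Ioo a b,
      Θγ x = (z - (lam : ℂ))⁻¹ •
        (Θz x + ((z - (lam : ℂ))⁻¹ * Wr (toC (Θlam x)) (Θz x)) • Θt x
          + ((d : ℂ) - ω) • Φγ x))
    (hΨγ : ∀ x ∈ Ioo a b,
      Ψγ x = (z - (lam : ℂ))⁻¹ •
        (Ψz x + ((z - (lam : ℂ))⁻¹ * Wr (toC (Θlam x)) (Ψz x)) • Θt x)) :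
    ∀ x ∈ Ioo a b,
      Ψγ x = Θγ x +
        ((M + ω * (z - (lam : ℂ))) / (z - (lam : ℂ)) ^ 2
          - (d : ℂ) / (z - (lam : ℂ))) • Φγ x := by
  intro x hx
  rw [hΨγ x hx, hΘγ x hx, hΦγ x hx, hΨ x hx, Wr_add, Wr_smul]
  exact inv_smul_add_eq_add_smul_commuted (sub_ne_zero.mpr hz) _ _ _ _ _ _ _ _

/-- The singular Weyl function of the operator obtained by double commutation at
the right endpoint from `u₊(λ,·) = Θ(λ,·)` is
`M_γ(z) = (M(z) + ω(z-λ))/(z-λ)² - d/(z-λ)` (with `d = γ⁻¹`,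
`ω = W_b(Θ(λ),Θ̇(λ))`): the transformed Weyl solution `Ψ_γ` decomposes as
`Θ_γ + M_γ Φ_γ`. -/
theorem double_commutation_right_weyl_function
    (a b lam : ℝ) (z : ℂ) (hz : z ≠ (lam : ℂ)) (d : ℝ) (ω : ℂ)
    (Θlam : ℝ → ℝ × ℝ)
    (c : ℝ → ℝ) (hc0 : ∀ x ∈ Ioo a b, c x ≠ 0)
    (Θt : ℝ → ℂ × ℂ) (hΘt : ∀ x ∈ Ioo a b, Θt x = ((c x : ℂ))⁻¹ • toC (Θlam x))
    (Θz Φz Ψz : ℝ → ℂ × ℂ) (M : ℂ)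
    (hΨ : ∀ x ∈ Ioo a b, Ψz x = Θz x + M • Φz x)
    (Φγ Θγ Ψγ : ℝ → ℂ × ℂ)
    (hΦγ : ∀ x ∈ Ioo a b,
      Φγ x = (z - (lam : ℂ)) • Φz x + (Wr (toC (Θlam x)) (Φz x)) • Θt x)
    (hΘγ : ∀ x ∈ Ioo a b,
      Θγ x = (z - (lam : ℂ))⁻¹ •
        (Θz x + ((z - (lam : ℂ))⁻¹ * Wr (toC (Θlam x)) (Θz x)) • Θt x
          + ((d : ℂ) - ω) • Φγ x))
    (hΨγ : ∀ x ∈ Ioo a b,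
      Ψγ x = (z - (lam : ℂ))⁻¹ •
        (Ψz x + ((z - (lam : ℂ))⁻¹ * Wr (toC (Θlam x)) (Ψz x)) • Θt x)) :
    ∀ x ∈ Ioo a b,
      Ψγ x = Θγ x +
        ((M + ω * (z - (lam : ℂ))) / (z - (lam : ℂ)) ^ 2
          - (d : ℂ) / (z - (lam : ℂ))) • Φγ x :=
  double_commutation_right_weyl_function_general a b lam z hz d ω Θlam Θt Θz Φz Ψz M hΨ Φγ Θγ Ψγ hΦγ
    hΘγ hΨγ
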